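/- Let X be a continuum such that B(x) = π(x) for every x ∈ X and Λ_X = {π(x) : x ∈ X} is a decomposition of X. Then each element of Λ_X is a terminal subcontinuum of X: if A is a subcontinuum with A ∩ π(x) ≠ ∅, then A ⊆ π(x) or π(x) ⊆ A. -/

import Mathlib

open Set Metric TopologicalSpace unitInterval

variable {X : Type*} [MetricSpace X] [CompactSpace X] [ConnectedSpace X] [Nonempty X]

/-- An order arc in the hyperspace `C(X)`: a continuous map into nonempty compact
(connected-valued) subsets, strictly increasing with respect to inclusion. -/
def IsOrderArc {X : Type*} [MetricSpace X] (α : unitInterval → NonemptyCompacts X) : Prop :=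
  Continuous α ∧ (∀ t, IsConnected (α t : Set X)) ∧
    ∀ s t : unitInterval, s < t → (α s : Set X) ⊂ (α t : Set X)

/-- `B` blocks `A`: every continuous path in `2^X` from `A` to `X` meets `B`
at some time `t < 1`. -/
def Blocks {X : Type*} [MetricSpace X] (B A : Set X) : Prop :=
  ∀ γ : unitInterval → NonemptyCompacts X, Continuous γ →
    (γ 0 : Set X) = A → (γ 1 : Set X) = univ →
    ∃ t : unitInterval, t < 1 ∧ ((γ t : Set X) ∩ B).Nonempty

/-- The blocked set of a point `x`: all points `y` such that `{x}` blocks `{y}`. -/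
def BlockedSet {X : Type*} [MetricSpace X] (x : X) : Set X :=
  {y | Blocks {x} {y}}

/-- A nonblocker of singletons: a nonempty proper closed set `A` such that every
point outside `A` admits an order arc from its singleton to `X` avoiding `A`
at all times `t < 1`. -/
def IsNonBlocker {X : Type*} [MetricSpace X] (A : Set X) : Prop :=
  IsClosed A ∧ A.Nonempty ∧ A ≠ univ ∧
    ∀ x ∉ A, ∃ α : unitInterval → NonemptyCompacts X, IsOrderArc α ∧
      (α 0 : Set X) = {x} ∧ (α 1 : Set X) = univ ∧
      ∀ t : unitInterval, t < 1 → (α t : Set X) ∩ A = ∅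

open Classical in
/-- `π(x)`: the intersection of all nonblockers of singletons containing `x`,
or `X` if no such nonblocker exists. -/
noncomputable def piSet {X : Type*} [MetricSpace X] (x : X) : Set X :=
  if ∃ A : Set X, IsNonBlocker A ∧ x ∈ A then ⋂₀ {A : Set X | IsNonBlocker A ∧ x ∈ A}
  else univ

/-- The Kelley property of a continuum. -/
def KelleyContinuum (X : Type*) [MetricSpace X] : Prop :=
  ∀ ε > (0 : ℝ), ∃ δ > (0 : ℝ), ∀ p q : X, dist p q < δ →
    ∀ A : Set X, IsCompact A → IsConnected A → p ∈ A →
      ∃ B : Set X, IsCompact B ∧ IsConnected B ∧ q ∈ B ∧ hausdorffDist A B < ε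

/-- A shore set: a nonempty proper closed set which can be avoided by subcontinua
arbitrarily close (in Hausdorff distance) to the whole space. -/
def IsShoreSet {X : Type*} [MetricSpace X] (A : Set X) : Prop :=
  IsClosed A ∧ A.Nonempty ∧ A ≠ univ ∧
    ∀ ε > (0 : ℝ), ∃ B : Set X, IsCompact B ∧ IsConnected B ∧
      hausdorffDist B (univ : Set X) < ε ∧ B ∩ A = ∅

/-- A shore point: a point whose singleton is a shore set. -/
def IsShorePoint {X : Type*} [MetricSpace X] (x : X) : Prop :=
  IsShoreSet ({x} : Set X)

/-- Two points of `S` are joined by an arc lying in `S` (or are equal). -/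
def ArcIn {X : Type*} [MetricSpace X] (S : Set X) (x y : X) : Prop :=
  x = y ∨ ∃ f : unitInterval → X, Continuous f ∧ Function.Injective f ∧
    f 0 = x ∧ f 1 = y ∧ ∀ t, f t ∈ S

/-- A set is arcwise connected if any two of its points are joined by an arc in it. -/
def IsArcwiseConnected {X : Type*} [MetricSpace X] (S : Set X) : Prop :=
  ∀ x ∈ S, ∀ y ∈ S, ArcIn S x y

/-- The arc component of `x` in `S`. -/
def arcComponent {X : Type*} [MetricSpace X] (S : Set X) (x : X) : Set X :=
  {y | y ∈ S ∧ ArcIn S x y}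

/-- A continuum `K` is unicoherent if the intersection of any two subcontinua
whose union is `K` is connected. -/
def IsUnicoherent {X : Type*} [MetricSpace X] (K : Set X) : Prop :=
  ∀ A B : Set X, IsCompact A → IsConnected A → IsCompact B → IsConnected B →
    A ∪ B = K → IsConnected (A ∩ B)

/-- A dendroid: an arcwise connected, hereditarily unicoherent continuum. -/
def IsDendroid (X : Type*) [MetricSpace X] [CompactSpace X] [ConnectedSpace X]
    [Nonempty X] : Prop :=
  IsArcwiseConnected (univ : Set X) ∧
    ∀ K : Set X, IsCompact K → IsConnected K → IsUnicoherent K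

/-- A strong center: a point `p` for which there are nonempty open sets `U`, `V`
such that every arc from `U` to `V` passes through `p`. -/
def IsStrongCenter {X : Type*} [MetricSpace X] (p : X) : Prop :=
  ∃ U V : Set X, IsOpen U ∧ IsOpen V ∧ U.Nonempty ∧ V.Nonempty ∧
    ∀ f : unitInterval → X, Continuous f → Function.Injective f →
      f 0 ∈ U → f 1 ∈ V → ∃ t, f t = p

/-- A homogeneous space: any point can be mapped to any other by a self-homeomorphism. -/
def IsHomogeneous (X : Type*) [MetricSpace X] : Prop :=
  ∀ p q : X, ∃ h : X ≃ₜ X, h p = q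


/-!
Suppose `A` meets `π(x)` at `a`, contains a point `b ∉ π(x)` and misses a point `c ∈ π(x)`.
Since `π` is a decomposition, `B(c) = π(c) = π(x)`, so `{c}` blocks `{a}` but not `{b}`: some
path `γ` in `2^X` from `{b}` to `X` avoids `c` before time `1`. Following a path in `2^A` from
`{a}` to `A` by `t ↦ A ∪ γ t` gives a path from `{a}` to `X` avoiding `c`, a contradiction.

The path from `{a}` to `A` is an order arc: a maximal chain of subcontinua of `A` through `{a}`
is closed in `2^X`, and boundary bumping shows it has no gaps, so a strictly antitone continuous
function on `2^X` (a Whitney map) maps it homeomorphically onto an interval.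
-/

section Topology

variable {α : Type*} [TopologicalSpace α] [T2Space α]

theorem exists_isClopen_of_disjoint_connectedComponent [CompactSpace α] {x : α} {F : Set α}
    (hF : IsClosed F) (h : Disjoint (connectedComponent x) F) :
    ∃ V, IsClopen V ∧ x ∈ V ∧ Disjoint V F := by
  rw [connectedComponent_eq_iInter_isClopen, disjoint_iff_inter_eq_empty, inter_comm] at h
  obtain ⟨t, ht⟩ := hF.isCompact.elim_finite_subfamily_closed
    (fun s : {s : Set α // IsClopen s ∧ x ∈ s} => (s : Set α)) (fun s => s.2.1.1) h
  refine ⟨⋂ s ∈ t, (s : Set α), isClopen_biInter_finset fun s _ => s.2.1,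
    mem_iInter₂.2 fun s _ => s.2.2, ?_⟩
  rwa [disjoint_iff_inter_eq_empty, inter_comm]

theorem connectedComponentIn_diff_inter_closure_nonempty {N U : Set α} {x : α}
    (hNc : IsCompact N) (hN : IsPreconnected N) (hU : IsOpen U) (hNU : (N ∩ U).Nonempty)
    (hx : x ∈ N \ U) : (connectedComponentIn (N \ U) x ∩ closure U).Nonempty := by
  have := isCompact_iff_compactSpace.1 (hNc.diff hU)
  by_contra hdisj
  rw [not_nonempty_iff_eq_empty, ← disjoint_iff_inter_eq_empty,
    connectedComponentIn_eq_image hx] at hdisj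
  obtain ⟨V, hV, hxV, hVU⟩ := exists_isClopen_of_disjoint_connectedComponent
    (isClosed_closure.preimage continuous_subtype_val)
    (disjoint_left.2 fun y hy hyU => disjoint_left.1 hdisj (mem_image_of_mem _ hy) hyU)
  have hcover : N ⊆ (↑) '' V ∪ ((↑) '' Vᶜ ∪ (N ∩ closure U)) := by
    intro y hy
    by_cases hyU : y ∈ U
    · exact Or.inr (Or.inr ⟨hy, subset_closure hyU⟩)
    · by_cases hyV : (⟨y, hy, hyU⟩ : ↥(N \ U)) ∈ V
      exacts [Or.inl ⟨_, hyV, rfl⟩, Or.inr (Or.inl ⟨_, hyV, rfl⟩)]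
  have hdisj' : Disjoint (((↑) : ↥(N \ U) → α) '' V) ((↑) '' Vᶜ ∪ (N ∩ closure U)) := by
    refine disjoint_union_right.2 ⟨?_, disjoint_left.2 ?_⟩
    · exact (disjoint_compl_right.image Subtype.val_injective.injOn (subset_univ _) (subset_univ _))
    · rintro _ ⟨y, hyV, rfl⟩ ⟨_, hyU⟩
      exact disjoint_left.1 hVU hyV hyU
  rcases (isPreconnected_iff_subset_of_fully_disjoint_closed hNc.isClosed).1 hN _ _
      (hV.isClosed.isCompact.image continuous_subtype_val).isClosed
      (((hV.compl.isClosed.isCompact.image continuous_subtype_val).isClosed).union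
        (hNc.isClosed.inter isClosed_closure)) hcover hdisj' with h | h
  · obtain ⟨y, hyN, hyU⟩ := hNU
    obtain ⟨z, _, rfl⟩ := h hyN
    exact z.2.2 hyU
  · exact disjoint_left.1 hdisj' ⟨_, hxV, rfl⟩ (h hx.1)

end Topology

section Chain

variable {Y : Type*} [PartialOrder Y]

theorem exists_maximal_isChain_of_subset {𝒮 c : Set Y} (hc𝒮 : c ⊆ 𝒮) (hc : IsChain (· ≤ ·) c) :
    ∃ 𝒞, c ⊆ 𝒞 ∧ Maximal (fun d => d ⊆ 𝒮 ∧ IsChain (· ≤ ·) d) 𝒞 := by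
  refine zorn_subset_nonempty {d | d ⊆ 𝒮 ∧ IsChain (· ≤ ·) d} ?_ c ⟨hc𝒮, hc⟩
  rintro cs hcs hchain -
  refine ⟨⋃₀ cs, ⟨sUnion_subset fun d hd => (hcs hd).1, ?_⟩, fun d => subset_sUnion_of_mem⟩
  rintro S ⟨d, hd, hSd⟩ T ⟨e, he, hTe⟩ hST
  rcases hchain.total hd he with h | h
  exacts [(hcs he).2 (h hSd) hTe hST, (hcs hd).2 hSd (h hTe) hST]

theorem mem_of_maximal_isChain {𝒮 𝒞 : Set Y}
    (h : Maximal (fun d => d ⊆ 𝒮 ∧ IsChain (· ≤ ·) d) 𝒞) {P : Y} (hP : P ∈ 𝒮)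
    (hcomp : ∀ T ∈ 𝒞, P ≤ T ∨ T ≤ P) : P ∈ 𝒞 :=
  h.mem_of_prop_insert ⟨insert_subset hP h.prop.1, h.prop.2.insert fun T hT _ => hcomp T hT⟩

theorem isClosed_of_maximal_isChain [TopologicalSpace Y] [ClosedIicTopology Y]
    [ClosedIciTopology Y] {𝒮 𝒞 : Set Y} (h𝒮 : IsClosed 𝒮)
    (h : Maximal (fun d => d ⊆ 𝒮 ∧ IsChain (· ≤ ·) d) 𝒞) : IsClosed 𝒞 := by
  refine closure_subset_iff_isClosed.1 fun P hP =>
    mem_of_maximal_isChain h (closure_minimal h.prop.1 h𝒮 hP) fun T hT => ?_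
  exact closure_minimal (fun S hS => h.prop.2.total hS hT) (isClosed_Iic.union isClosed_Ici) hP

theorem IsCompact.ordConnected_image_of_strictAntiOn [TopologicalSpace Y] {C : Set Y}
    {W : Y → ℝ} (hC : IsCompact C) (hchain : IsChain (· ≤ ·) C)
    (hdense : ∀ S ∈ C, ∀ T ∈ C, S < T → ∃ U ∈ C, S < U ∧ U < T) (hW : ContinuousOn W C)
    (hanti : StrictAntiOn W C) : (W '' C).OrdConnected := by
  have hI : IsCompact (W '' C) := hC.image_of_continuousOn hW
  refine ⟨?_⟩
  rintro _ ⟨T, hT, rfl⟩ _ ⟨S, hS, rfl⟩ r ⟨hTr, hrS⟩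
  by_contra hr
  obtain ⟨_, ⟨⟨M, hM, rfl⟩, hrM⟩, hMleast⟩ :=
    (hI.inter_right isClosed_Ici).exists_isLeast ⟨W S, mem_image_of_mem W hS, hrS⟩
  obtain ⟨_, ⟨⟨N, hN, rfl⟩, hNr⟩, hNgreatest⟩ :=
    (hI.inter_right isClosed_Iic).exists_isGreatest ⟨W T, mem_image_of_mem W hT, hTr⟩
  replace hrM : r < W M := lt_of_le_of_ne hrM fun h => hr ⟨M, hM, h.symm⟩
  replace hNr : W N < r := lt_of_le_of_ne hNr fun h => hr ⟨N, hN, h⟩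
  have hMN : M < N := by
    rcases hchain.total hN hM with h | h
    · exact absurd (hanti.antitoneOn hN hM h) (by linarith)
    · exact lt_of_le_of_ne h (by rintro rfl; linarith)
  obtain ⟨U, hU, hMU, hUN⟩ := hdense M hM N hN hMN
  rcases le_total r (W U) with h | h
  · exact (hanti hM hU hMU).not_ge (hMleast ⟨mem_image_of_mem W hU, h⟩)
  · exact (hanti hU hN hUN).not_ge (hNgreatest ⟨mem_image_of_mem W hU, h⟩)

end Chain

theorem IsCompact.joinedIn_of_injOn {Y : Type*} [TopologicalSpace Y] {C : Set Y} {W : Y → ℝ}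
    (hC : IsCompact C) (hW : ContinuousOn W C) (hinj : InjOn W C) (hord : (W '' C).OrdConnected)
    {x y : Y} (hx : x ∈ C) (hy : y ∈ C) : JoinedIn C x y := by
  have := isCompact_iff_compactSpace.1 hC
  have := isPathConnected_iff_pathConnectedSpace.1
    (hord.convex.isPathConnected ⟨W x, mem_image_of_mem W hx⟩)
  let e := Continuous.homeoOfEquivCompactToT2 (f := Equiv.Set.imageOfInjOn W C hinj)
    (hW.domRestrict.subtype_mk _)
  have : PathConnectedSpace C := e.symm.surjective.pathConnectedSpace e.symm.continuous
  exact (isPathConnected_iff_pathConnectedSpace.2 this).joinedIn x hx y hy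

namespace TopologicalSpace.NonemptyCompacts

section T2

variable {α : Type*} [TopologicalSpace α] [T2Space α]

theorem exists_between_of_isPreconnected {M N : NonemptyCompacts α}
    (hM : IsPreconnected (M : Set α)) (hN : IsPreconnected (N : Set α)) (hMN : M < N) :
    ∃ P : NonemptyCompacts α, M < P ∧ P < N ∧ IsPreconnected (P : Set α) := by
  obtain ⟨hMN, z, hzN, hzM⟩ := SetLike.lt_iff_le_and_exists.1 hMN
  obtain ⟨U, V, hU, hV, hzU, hMV, hUV⟩ := SeparatedNhds.of_isCompact_isCompact isCompact_singleton
    M.isCompact (disjoint_singleton_left.2 hzM)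
  have hMU : Disjoint (M : Set α) (closure U) :=
    (disjoint_compl_right.mono_left hMV).mono_right
      (closure_minimal hUV.subset_compl_right hV.isClosed_compl)
  obtain ⟨m, hm⟩ := M.nonempty
  have hMK : (M : Set α) ⊆ N \ U := fun y hy => ⟨hMN hy, fun hyU => hUV.ne_of_mem hyU (hMV hy) rfl⟩
  set C := connectedComponentIn ((N : Set α) \ U) m
  have hCK : closure C ⊆ N \ U :=
    closure_minimal (connectedComponentIn_subset _ _) (N.isCompact.isClosed.sdiff hU)
  have hMC : (M : Set α) ⊆ closure C :=
    (hM.subset_connectedComponentIn hm hMK).trans subset_closure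
  obtain ⟨w, hwC, hwU⟩ := connectedComponentIn_diff_inter_closure_nonempty N.isCompact hN hU
    ⟨z, hzN, hzU rfl⟩ (hMK hm)
  let P : NonemptyCompacts α :=
    ⟨⟨closure C, N.isCompact.of_isClosed_subset isClosed_closure (hCK.trans sdiff_subset)⟩,
      M.nonempty.mono hMC⟩
  refine ⟨P, SetLike.lt_iff_le_and_exists.2 ⟨hMC, w, subset_closure hwC, ?_⟩,
    SetLike.lt_iff_le_and_exists.2 ⟨hCK.trans sdiff_subset, z, hzN, ?_⟩,
    isPreconnected_connectedComponentIn.closure⟩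
  · exact fun hwM => disjoint_left.1 hMU hwM hwU
  · exact fun hzC => (hCK hzC).2 (hzU rfl)

instance : ClosedIicTopology (NonemptyCompacts α) :=
  ⟨fun K => isClosed_subsets_of_isClosed K.isCompact.isClosed⟩

instance : ClosedIciTopology (NonemptyCompacts α) where
  isClosed_Ici K := by
    have : Ici K = ⋂ x ∈ (K : Set α), {L : NonemptyCompacts α | ((L : Set α) ∩ {x}).Nonempty} := by
      ext L
      simp [SetLike.le_def]
    rw [this]
    exact isClosed_biInter fun x _ => isClosed_inter_nonempty_of_isClosed isClosed_singleton

theorem isClosed_setOf_isPreconnected :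
    IsClosed {K : NonemptyCompacts α | IsPreconnected (K : Set α)} := by
  refine isOpen_compl_iff.1 (isOpen_iff_forall_mem_open.2 fun K hK => ?_)
  obtain ⟨t, t', ht, ht', hKt, ⟨x, hxK, hxt⟩, ⟨y, hyK, hyt'⟩, hdisj⟩ :
      ∃ t t', IsClosed t ∧ IsClosed t' ∧ (K : Set α) ⊆ t ∪ t' ∧ ((K : Set α) ∩ t).Nonempty ∧
        ((K : Set α) ∩ t').Nonempty ∧ ¬((K : Set α) ∩ (t ∩ t')).Nonempty := by
    simpa [isPreconnected_closed_iff] using hK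
  obtain ⟨U, V, hU, hV, hKU, hKV, hUV⟩ := SeparatedNhds.of_isCompact_isCompact
    (K.isCompact.inter_right ht) (K.isCompact.inter_right ht')
    (disjoint_left.2 fun z hz hz' => hdisj ⟨z, hz.1, hz.2, hz'.2⟩)
  refine ⟨{L | (L : Set α) ⊆ U ∪ V} ∩ {L | ((L : Set α) ∩ U).Nonempty} ∩
    {L | ((L : Set α) ∩ V).Nonempty}, fun L ⟨⟨hLUV, hLU⟩, hLV⟩ hL => ?_,
    ((isOpen_subsets_of_isOpen (hU.union hV)).inter (isOpen_inter_nonempty_of_isOpen hU)).inter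
      (isOpen_inter_nonempty_of_isOpen hV),
    ⟨⟨fun z hz => (hKt hz).imp (fun h => hKU ⟨hz, h⟩) (fun h => hKV ⟨hz, h⟩),
      ⟨x, hxK, hKU ⟨hxK, hxt⟩⟩⟩, ⟨y, hyK, hKV ⟨hyK, hyt'⟩⟩⟩⟩
  obtain ⟨z, -, hzU, hzV⟩ := hL U V hU hV hLUV hLU hLV
  exact disjoint_left.1 hUV hzU hzV

end T2

theorem exists_continuous_strictAnti {α : Type*} [MetricSpace α] [CompactSpace α] [Nonempty α] :
    ∃ W : NonemptyCompacts α → ℝ, Continuous W ∧ StrictAnti W := by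
  obtain ⟨u, hu⟩ := exists_dense_seq α
  have hle : ∀ n (K : NonemptyCompacts α), infDist (u n) K ≤ diam (univ : Set α) := fun n K =>
    let ⟨y, hy⟩ := K.nonempty
    (infDist_le_dist_of_mem hy).trans
      (dist_le_diam_of_mem isBounded_of_compactSpace trivial trivial)
  have hbound : Summable fun n : ℕ => (1 / 2 : ℝ) ^ n * diam (univ : Set α) :=
    (summable_geometric_of_lt_one (by norm_num) (by norm_num)).mul_right _
  have hterm : ∀ n (K L : NonemptyCompacts α), K ≤ L →
      (1 / 2 : ℝ) ^ n * infDist (u n) L ≤ (1 / 2) ^ n * infDist (u n) K := fun n K L hKL =>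
    mul_le_mul_of_nonneg_left (infDist_le_infDist_of_subset hKL K.nonempty) (by positivity)
  have hsummable : ∀ K : NonemptyCompacts α,
      Summable fun n => (1 / 2 : ℝ) ^ n * infDist (u n) K := fun K =>
    hbound.of_nonneg_of_le (fun n => mul_nonneg (by positivity) infDist_nonneg)
      (fun n => mul_le_mul_of_nonneg_left (hle n K) (by positivity))
  refine ⟨fun K => ∑' n, (1 / 2 : ℝ) ^ n * infDist (u n) K, continuous_tsum
    (fun n => continuous_const.mul (lipschitz_infDist_set (u n)).continuous) hbound
    (fun n K => by
      rw [Real.norm_of_nonneg (mul_nonneg (by positivity) infDist_nonneg)]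
      exact mul_le_mul_of_nonneg_left (hle n K) (by positivity)), fun K L hKL => ?_⟩
  obtain ⟨hKL, z, hzL, hzK⟩ := SetLike.lt_iff_le_and_exists.1 hKL
  have hr : 0 < infDist z K := (K.isCompact.isClosed.notMem_iff_infDist_pos K.nonempty).1 hzK
  obtain ⟨n, hn⟩ := Metric.denseRange_iff.1 hu z _ (half_pos hr)
  dsimp only
  refine (hsummable L).tsum_lt_tsum (i := n) (fun m => hterm m K L hKL) ?_ (hsummable K)
  refine mul_lt_mul_of_pos_left ?_ (by positivity)
  calc infDist (u n) L ≤ dist (u n) z := infDist_le_dist_of_mem hzL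
    _ < infDist z K / 2 := by rwa [dist_comm]
    _ < infDist (u n) K := by
      linarith [infDist_le_infDist_add_dist (x := z) (y := u n) (s := (K : Set α))]

theorem exists_between_of_maximal_isChain {α : Type*} [TopologicalSpace α] [T2Space α]
    {K L : NonemptyCompacts α} {𝒞 : Set (NonemptyCompacts α)}
    (h : Maximal (fun d => d ⊆ {P : NonemptyCompacts α | IsPreconnected (P : Set α)} ∩ Icc K L ∧
      IsChain (· ≤ ·) d) 𝒞) {M N : NonemptyCompacts α} (hM : M ∈ 𝒞) (hN : N ∈ 𝒞) (hMN : M < N) :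
    ∃ P ∈ 𝒞, M < P ∧ P < N := by
  by_contra! hgap
  have hsplit : ∀ T ∈ 𝒞, T ≤ M ∨ N ≤ T := fun T hT => by
    rcases h.prop.2.total hT hM with hTM | hMT
    · exact Or.inl hTM
    rcases eq_or_lt_of_le hMT with rfl | hMT
    · exact Or.inl le_rfl
    rcases h.prop.2.total hT hN with hTN | hNT
    · rcases eq_or_lt_of_le hTN with rfl | hTN
      exacts [Or.inr le_rfl, absurd hTN (hgap T hT hMT)]
    · exact Or.inr hNT
  obtain ⟨hMconn, hKM, -⟩ := h.prop.1 hM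
  obtain ⟨hNconn, -, hNL⟩ := h.prop.1 hN
  obtain ⟨P, hMP, hPN, hP⟩ := exists_between_of_isPreconnected hMconn hNconn hMN
  have hP𝒞 : P ∈ 𝒞 := mem_of_maximal_isChain h
    ⟨hP, hKM.trans hMP.le, hPN.le.trans hNL⟩ fun T hT =>
      (hsplit T hT).symm.imp (hPN.le.trans ·) (·.trans hMP.le)
  rcases hsplit P hP𝒞 with h' | h'
  exacts [h'.not_gt hMP, h'.not_gt hPN]

theorem joinedIn_Iic_singleton {α : Type*} [MetricSpace α] [CompactSpace α]
    {K : NonemptyCompacts α} (hK : IsPreconnected (K : Set α)) {x : α} (hx : x ∈ K) :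
    JoinedIn (Iic K) {x} K := by
  have : Nonempty α := ⟨x⟩
  have hxK : ({x} : NonemptyCompacts α) ≤ K := fun y hy => by
    rwa [(mem_singleton y x).1 hy]
  obtain ⟨𝒞, h01, hmax⟩ := exists_maximal_isChain_of_subset
    (𝒮 := {P : NonemptyCompacts α | IsPreconnected (P : Set α)} ∩ Icc {x} K)
    (pair_subset ⟨isPreconnected_singleton, le_rfl, hxK⟩ ⟨hK, hxK, le_rfl⟩) (IsChain.pair hxK)
  have h𝒞 : IsCompact 𝒞 :=
    (isClosed_of_maximal_isChain (isClosed_setOf_isPreconnected.inter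
      (Ici_inter_Iic (a := {x}) (b := K) ▸ isClosed_Ici.inter isClosed_Iic)) hmax).isCompact
  obtain ⟨W, hWc, hW⟩ := exists_continuous_strictAnti (α := α)
  have hinj : InjOn W 𝒞 := fun S hS T hT hST => by
    by_contra hne
    rcases hmax.prop.2 hS hT hne with h | h
    exacts [(hW (lt_of_le_of_ne h hne)).ne' hST, (hW (lt_of_le_of_ne h (Ne.symm hne))).ne hST]
  have hord := h𝒞.ordConnected_image_of_strictAntiOn hmax.prop.2
    (fun _ hM _ hN => exists_between_of_maximal_isChain hmax hM hN) hWc.continuousOn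
    (hW.strictAntiOn _)
  exact (h𝒞.joinedIn_of_injOn hWc.continuousOn hinj hord (h01 (mem_insert _ _))
    (h01 (mem_insert_of_mem _ rfl))).mono fun S hS => (hmax.prop.1 hS).2.2

end TopologicalSpace.NonemptyCompacts

theorem mem_piSet_self {α : Type*} [MetricSpace α] (x : α) : x ∈ piSet x := by
  unfold piSet
  split_ifs
  exacts [mem_sInter.2 fun A hA => hA.2, mem_univ x]

theorem Blocks.singleton_of_mem {α : Type*} [MetricSpace α] [CompactSpace α] {A B : Set α}
    {a b : α} (hA : IsCompact A) (hAconn : IsPreconnected A) (ha : a ∈ A) (hb : b ∈ A)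
    (hAB : Disjoint A B) (h : Blocks B {a}) : Blocks B {b} := by
  by_contra hb'
  simp only [Blocks, not_forall, not_exists, not_and, exists_prop] at hb'
  obtain ⟨γ, hγ, hγ0, hγ1, hγB⟩ := hb'
  have : Nonempty α := ⟨a⟩
  let K : NonemptyCompacts α := ⟨⟨A, hA⟩, ⟨a, ha⟩⟩
  obtain ⟨p, hpK⟩ := NonemptyCompacts.joinedIn_Iic_singleton (K := K) hAconn ha
  let q : Path K ⊤ :=
    { toFun := fun s => K ⊔ γ s
      continuous_toFun := continuous_const.sup hγ
      source' := NonemptyCompacts.ext <| by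
        rw [NonemptyCompacts.coe_sup, hγ0]
        exact union_eq_self_of_subset_right (singleton_subset_iff.2 hb)
      target' := NonemptyCompacts.ext <| by simp [hγ1] }
  obtain ⟨t, ht, y, hyt, hyB⟩ := h _ (p.trans q).continuous (by simp) (by simp)
  rw [Path.trans_apply] at hyt
  split_ifs at hyt with ht'
  · exact disjoint_left.1 hAB (hpK _ hyt) hyB
  · rcases (NonemptyCompacts.coe_sup K _ ▸ hyt : y ∈ A ∪ _) with hyA | hyγ
    · exact disjoint_left.1 hAB hyA hyB
    · refine hγB _ ?_ ⟨y, hyγ, hyB⟩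
      change (2 * t - 1 : ℝ) < 1
      linarith [show (t : ℝ) < 1 from ht]

theorem pi_terminal_of_decomposition_general
    (hB : ∀ x : X, BlockedSet x = piSet x)
    (hpair : ∀ x y : X, piSet x = piSet y ∨ piSet x ∩ piSet y = ∅)
    (x : X) (A : Set X) (hAc : IsCompact A) (hAconn : IsConnected A)
    (hmeet : (A ∩ piSet x).Nonempty) :
    A ⊆ piSet x ∨ piSet x ⊆ A := by
  refine or_iff_not_imp_left.2 fun hsub c hc => by_contra fun hcA => ?_
  obtain ⟨a, haA, hax⟩ := hmeet
  obtain ⟨b, hbA, hbx⟩ := not_subset.1 hsub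
  have hBc : BlockedSet c = piSet x := (hB c).trans <| (hpair c x).resolve_right fun h =>
    (h ▸ ⟨mem_piSet_self c, hc⟩ : c ∈ (∅ : Set X))
  have hblocks : Blocks {c} {a} := (hBc ▸ hax : a ∈ BlockedSet c)
  have hbc : b ∈ BlockedSet c := hblocks.singleton_of_mem hAc hAconn.isPreconnected haA hbA
    (disjoint_singleton_right.2 hcA)
  exact hbx (hBc ▸ hbc)

theorem pi_terminal_of_decomposition
    (hB : ∀ x : X, BlockedSet x = piSet x)
    (hpair : ∀ x y : X, piSet x = piSet y ∨ piSet x ∩ piSet y = ∅)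
    (hcover : ⋃ x : X, piSet x = univ)
    (x : X) (A : Set X) (hAc : IsCompact A) (hAconn : IsConnected A)
    (hmeet : (A ∩ piSet x).Nonempty) :
    A ⊆ piSet x ∨ piSet x ⊆ A :=
  pi_terminal_of_decomposition_general hB hpair x A hAc hAconn hmeet
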